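/- arXiv:2302.02420 — 2 statements merged into one kernel-verified Lean document; each statement's English description precedes it below -/
import Mathlib

section
/- Given prior p(z|μ_p, σ_p²) = N(μ_p, σ_p²) with normal-inverse-gamma hyperprior p(μ_p|σ_p²) = N(0, σ_p²/t), p(σ_p²) = IG(α, β) (all coordinatewise), and variational q(z) = N(μ_q, diag(σ_q²)), the optimal collapsed posterior is q*(μ_p|σ_p²) = N(μ_q/(t+1), σ_p²/(t+1)) and q*(σ_p²) = IG(α + 1/2, β + t μ_q²/(2(t+1)) + σ_q²/2) coordinatewise. -/
/-- Collapsed VI with normal-inverse-gamma hyperprior (coordinatewise on ℝ):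
with prior `p(z|μ_p, σ_p²) = N(μ_p, σ_p²)`, `p(μ_p|σ_p²) = N(0, σ_p²/t)`,
`p(σ_p²) = IG(α, β)`, and variational `q(z) = N(μ_q, σ_q²)`, the log of the optimal
collapsed posterior,
`log p(μ_p|σ_p²) + log p(σ_p²) + E_{z~N(μ_q,σ_q²)}[log N(z|μ_p, σ_p²)]`,
equals, up to an additive constant, the log-density of the normal-inverse-gamma family
`N(μ_p | μ_q/(t+1), σ_p²/(t+1)) · IG(σ_p² | α + 1/2, β + t μ_q²/(2(t+1)) + σ_q²/2)`,
i.e. the log of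
`exp(−(t+1)(μ_p−μ_q/(t+1))²/(2σ_p²)) (σ_p²)^{−(α+1/2)−3/2} exp(−(β + tμ_q²/(2(t+1)) + σ_q²/2)/σ_p²)`. -/
theorem collapsed_mv_optimal_posterior (t α β μq σq2 : ℝ)
    (ht : 0 < t) (hα : 0 < α) (hβ : 0 < β) (hσ : 0 < σq2) :
    ∃ C : ℝ, ∀ s μp : ℝ, 0 < s →
      ((-(t * μp ^ 2) / (2 * s) - (1 / 2) * Real.log (2 * Real.pi * s / t)) +
        (-(α + 1) * Real.log s - β / s) +
        (-(((μq - μp) ^ 2 + σq2) / (2 * s)) - (1 / 2) * Real.log (2 * Real.pi * s))) =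
      C + (-((t + 1) * (μp - μq / (t + 1)) ^ 2 / (2 * s)) +
        (-(α + 1 / 2) - 3 / 2) * Real.log s -
        (β + t * μq ^ 2 / (2 * (t + 1)) + σq2 / 2) / s) := by
  refine ⟨-(1 / 2) * Real.log (2 * Real.pi / t) - (1 / 2) * Real.log (2 * Real.pi), ?_⟩
  intro s μp hs
  have hs' : s ≠ 0 := hs.ne'
  have ht1 : t + 1 ≠ 0 := by positivity
  rw [show 2 * Real.pi * s / t = (2 * Real.pi / t) * s by ring,
    Real.log_mul (by positivity) hs',
    show 2 * Real.pi * s = (2 * Real.pi) * s by ring,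
    Real.log_mul (by positivity) hs']
  field_simp
  ring
end

section
/- For the matrix X_N ∈ ℝ^{d×N} with N > d and full row rank, and symmetric positive definite S₀, V ∈ ℝ^{d×d}, the Moore–Penrose pseudoinverse of X_NᵀS₀X_N satisfies (X_NᵀS₀X_N)⁺ = X_Nᵀ(X_NX_Nᵀ)⁻¹S₀⁻¹(X_NX_Nᵀ)⁻¹X_N, and consequently tr((X_NᵀS₀X_N)⁺(X_NᵀVX_N)) = tr(S₀⁻¹V). -/
open Matrix

/-- `P` is the Moore–Penrose pseudoinverse of `A`. -/
def IsMoorePenrose {n : Type*} [Fintype n] [DecidableEq n]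
    (A P : Matrix n n ℝ) : Prop :=
  A * P * A = A ∧ P * A * P = P ∧ (A * P)ᵀ = A * P ∧ (P * A)ᵀ = P * A

/-- For `X ∈ ℝ^{d×N}` with `N > d` and full row rank (so `X Xᵀ` is invertible) and
symmetric positive definite `S₀, V`, the Moore–Penrose pseudoinverse of `Xᵀ S₀ X`
is `Xᵀ (X Xᵀ)⁻¹ S₀⁻¹ (X Xᵀ)⁻¹ X`, and consequently
`tr((Xᵀ S₀ X)⁺ (Xᵀ V X)) = tr(S₀⁻¹ V)`. -/
theorem pseudoinverse_formula_and_trace (d N : ℕ) (hdN : d < N)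
    (X : Matrix (Fin d) (Fin N) ℝ) (hX : IsUnit (X * Xᵀ))
    (S₀ V : Matrix (Fin d) (Fin d) ℝ) (hS₀ : S₀.PosDef) (hV : V.PosDef) :
    IsMoorePenrose (Xᵀ * S₀ * X) (Xᵀ * (X * Xᵀ)⁻¹ * S₀⁻¹ * (X * Xᵀ)⁻¹ * X) ∧
    Matrix.trace ((Xᵀ * (X * Xᵀ)⁻¹ * S₀⁻¹ * (X * Xᵀ)⁻¹ * X) * (Xᵀ * V * X)) =
      Matrix.trace (S₀⁻¹ * V) := by
  have hdet : IsUnit (X * Xᵀ).det := (Matrix.isUnit_iff_isUnit_det _).mp hX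
  have hSdet : IsUnit S₀.det := hS₀.det_pos.ne'.isUnit
  have h1 : (X * Xᵀ) * (X * Xᵀ)⁻¹ = 1 := Matrix.mul_nonsing_inv _ hdet
  have h2 : (X * Xᵀ)⁻¹ * (X * Xᵀ) = 1 := Matrix.nonsing_inv_mul _ hdet
  have hS1 : S₀ * S₀⁻¹ = 1 := Matrix.mul_nonsing_inv _ hSdet
  have hS2 : S₀⁻¹ * S₀ = 1 := Matrix.nonsing_inv_mul _ hSdet
  have hXXt : (X * Xᵀ)ᵀ = X * Xᵀ := by simp [Matrix.transpose_mul]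
  have hXXi : ((X * Xᵀ)⁻¹)ᵀ = (X * Xᵀ)⁻¹ := by
    rw [Matrix.transpose_nonsing_inv, hXXt]
  have hSt : S₀ᵀ = S₀ := hS₀.isHermitian.eq
  have hSit : (S₀⁻¹)ᵀ = S₀⁻¹ := by rw [Matrix.transpose_nonsing_inv, hSt]
  have c1 : ∀ B : Matrix (Fin d) (Fin N) ℝ, X * (Xᵀ * ((X * Xᵀ)⁻¹ * B)) = B := by
    intro B; rw [← Matrix.mul_assoc X Xᵀ, ← Matrix.mul_assoc, h1, Matrix.one_mul]
  have c2 : ∀ B : Matrix (Fin d) (Fin N) ℝ, S₀ * (S₀⁻¹ * B) = B := by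
    intro B; rw [← Matrix.mul_assoc, hS1, Matrix.one_mul]
  have c3 : ∀ B : Matrix (Fin d) (Fin N) ℝ, S₀⁻¹ * (S₀ * B) = B := by
    intro B; rw [← Matrix.mul_assoc, hS2, Matrix.one_mul]
  have c4 : ∀ B : Matrix (Fin d) (Fin N) ℝ, (X * Xᵀ)⁻¹ * (X * (Xᵀ * B)) = B := by
    intro B; rw [← Matrix.mul_assoc X Xᵀ, ← Matrix.mul_assoc, h2, Matrix.one_mul]
  refine ⟨⟨?_, ?_, ?_, ?_⟩, ?_⟩
  · simp only [Matrix.mul_assoc, c1, c2, c3, c4]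
  · simp only [Matrix.mul_assoc, c1, c2, c3, c4]
  · simp only [Matrix.mul_assoc, c1, c2, c3, c4, Matrix.transpose_mul, hXXi, hSt, hSit, Matrix.transpose_transpose]
  · simp only [Matrix.mul_assoc, c1, c2, c3, c4, Matrix.transpose_mul, hXXi, hSt, hSit, Matrix.transpose_transpose]
  · simp only [Matrix.mul_assoc, c1, c2, c3, c4]
    rw [Matrix.trace_mul_comm]
    simp only [← Matrix.mul_assoc]
    rw [Matrix.mul_assoc ((X * Xᵀ)⁻¹ * S₀⁻¹ * V) X Xᵀ, Matrix.trace_mul_comm,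
      ← Matrix.mul_assoc, ← Matrix.mul_assoc, h1, Matrix.one_mul]
end
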